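/- (Setup of Proposition 'semidirectPexp' and Lemma 'lemmaderivativeST') Let 𝔄 be a complete normed ℝ-algebra with unit and bracket [a,b] := ab − ba, let γ, β : ℝ → 𝔄 be continuous, and let g : ℝ → 𝔄 be differentiable with g(t) invertible for all t and g'(t) = g(t)·γ(t) (i.e. g_t = Pexp(∫₀ᵗ γ_s ds)·g₀). Define τ(t) := g(t)⁻¹·(∫₀ᵗ g(s)β(s)g(s)⁻¹ ds)·g(t). Then: (i) t ↦ g(t)τ(t)g(t)⁻¹ is differentiable with derivative g(t)β(t)g(t)⁻¹ (the identity underlying d/dt S_{τF}[(g_t,τ_t),A] = S_{τF}[(g_t,β_t),A]); and (ii) τ is differentiable with τ'(t) = β(t) − [γ(t), τ(t)]. -/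

import Mathlib

/-!
The conjugate `g τ g⁻¹` is, by construction, the primitive `∫₀ᵗ g β g⁻¹`, so (i) is the
fundamental theorem of calculus. For (ii), differentiating `g⁻¹ g = 1` along `g' = g γ` shows
that `g⁻¹` obeys the reversed flow `(g⁻¹)' = -γ g⁻¹`; the product rule applied to
`τ = g⁻¹ (∫₀ᵗ g β g⁻¹) g` then gives the term `β` from the integrand and the commutator
`-[γ, τ]` from the two outer factors.
-/

open scoped Ring

section Conjugation

variable {R : Type*} [MonoidWithZero R] {a : R}

theorem IsUnit.mul_inverse_mul_mul_mul_inverse (ha : IsUnit a) (x : R) :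
    a * (a⁻¹ʳ * x * a) * a⁻¹ʳ = x := by
  obtain ⟨u, rfl⟩ := ha
  simp [mul_assoc]

theorem IsUnit.inverse_mul_mul_mul_inverse_mul (ha : IsUnit a) (x : R) :
    a⁻¹ʳ * (a * x * a⁻¹ʳ) * a = x := by
  obtain ⟨u, rfl⟩ := ha
  simp [mul_assoc]

end Conjugation

section Flow

variable {𝕜 : Type*} [NontriviallyNormedField 𝕜]
  {R : Type*} [NormedRing R] [NormedAlgebra 𝕜 R] {g F : 𝕜 → R} {g' F' c : R} {t : 𝕜}

theorem HasDerivAt.ringInverse [HasSummableGeomSeries R] (hg : HasDerivAt g g' t)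
    (hu : IsUnit (g t)) :
    HasDerivAt (fun s => (g s)⁻¹ʳ) (-((g t)⁻¹ʳ * g' * (g t)⁻¹ʳ)) t := by
  obtain ⟨u, hu⟩ := hu
  have hinv := hasFDerivAt_ringInverse (𝕜 := 𝕜) u
  rw [hu] at hinv
  simpa [← hu, Function.comp_def] using hinv.comp_hasDerivAt t hg

theorem HasDerivAt.ringInverse_of_flow [HasSummableGeomSeries R] (hg : HasDerivAt g (g t * c) t)
    (hu : IsUnit (g t)) :
    HasDerivAt (fun s => (g s)⁻¹ʳ) (-(c * (g t)⁻¹ʳ)) t := by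
  convert hg.ringInverse hu using 2
  rw [← mul_assoc, Ring.inverse_mul_cancel _ hu, one_mul]

theorem HasDerivAt.inverse_mul_mul_of_flow [HasSummableGeomSeries R]
    (hg : HasDerivAt g (g t * c) t) (hu : IsUnit (g t)) (hF : HasDerivAt F F' t) :
    HasDerivAt (fun s => (g s)⁻¹ʳ * F s * g s)
      ((g t)⁻¹ʳ * F' * g t -
        (c * ((g t)⁻¹ʳ * F t * g t) - (g t)⁻¹ʳ * F t * g t * c)) t := by
  refine (((hg.ringInverse_of_flow hu).mul hF).mul hg).congr_deriv ?_
  rw [Pi.mul_apply]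
  noncomm_ring

end Flow

theorem stmt12_general
    {𝔄 : Type*} [NormedRing 𝔄] [NormedAlgebra ℝ 𝔄] [CompleteSpace 𝔄]
    (γ β : ℝ → 𝔄)
    (hβ : Continuous β)
    (g : ℝ → 𝔄)
    (hgunit : ∀ t : ℝ, IsUnit (g t))
    (hgflow : ∀ t : ℝ, HasDerivAt g (g t * γ t) t)
    (τ : ℝ → 𝔄)
    (hτ : ∀ t : ℝ, τ t =
      Ring.inverse (g t) * (∫ s in (0:ℝ)..t, g s * β s * Ring.inverse (g s)) * g t) :
    (∀ t : ℝ, HasDerivAt (fun u => g u * τ u * Ring.inverse (g u))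
      (g t * β t * Ring.inverse (g t)) t) ∧
    (∀ t : ℝ, HasDerivAt τ (β t - (γ t * τ t - τ t * γ t)) t) := by
  set F : ℝ → 𝔄 := fun t => ∫ s in (0:ℝ)..t, g s * β s * (g s)⁻¹ʳ
  have hg_cont : Continuous g :=
    continuous_iff_continuousAt.2 fun t => (hgflow t).continuousAt
  have hginv_cont : Continuous fun s => (g s)⁻¹ʳ :=
    continuous_iff_continuousAt.2 fun t =>
      ((hgflow t).ringInverse_of_flow (hgunit t)).continuousAt
  have hF_deriv (t : ℝ) : HasDerivAt F (g t * β t * (g t)⁻¹ʳ) t :=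
    (((hg_cont.mul hβ).mul hginv_cont).integral_hasStrictDerivAt 0 t).hasDerivAt
  have hτF : τ = fun u => (g u)⁻¹ʳ * F u * g u := funext hτ
  have hconj : (fun u => g u * τ u * (g u)⁻¹ʳ) = F := by
    funext u
    rw [hτF, (hgunit u).mul_inverse_mul_mul_mul_inverse]
  refine ⟨fun t => hconj ▸ hF_deriv t, fun t => ?_⟩
  have hτ_deriv := (hgflow t).inverse_mul_mul_of_flow (hgunit t) (hF_deriv t)
  have hτt : (g t)⁻¹ʳ * F t * g t = τ t := (hτ t).symm
  rwa [(hgunit t).inverse_mul_mul_mul_inverse_mul, hτt, ← hτF] at hτ_deriv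

/-- **Setup of Proposition `semidirectPexp` and Lemma `lemmaderivativeST`.**  Let `𝔄` be
a complete normed ℝ-algebra with unit and bracket `[a,b] = ab - ba`, let `γ, β : ℝ → 𝔄`
be continuous, and let `g : ℝ → 𝔄` be differentiable with invertible values and
`g' = g·γ` (i.e. `g_t = Pexp(∫₀ᵗ γ_s ds)·g₀`).  Define
`τ(t) := g(t)⁻¹ (∫₀ᵗ g(s) β(s) g(s)⁻¹ ds) g(t)`.  Then:
(i) `t ↦ g(t) τ(t) g(t)⁻¹` is differentiable with derivative `g(t) β(t) g(t)⁻¹`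
(the identity underlying `d/dt S_{τF}[(g_t,τ_t),A] = S_{τF}[(g_t,β_t),A]`); and
(ii) `τ` is differentiable with `τ'(t) = β(t) - [γ(t), τ(t)]`. -/
theorem stmt12
    {𝔄 : Type*} [NormedRing 𝔄] [NormedAlgebra ℝ 𝔄] [CompleteSpace 𝔄]
    (γ β : ℝ → 𝔄)
    (hγ : Continuous γ) (hβ : Continuous β)
    (g : ℝ → 𝔄)
    (hgdiff : Differentiable ℝ g)
    (hgunit : ∀ t : ℝ, IsUnit (g t))
    (hgflow : ∀ t : ℝ, HasDerivAt g (g t * γ t) t)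
    (τ : ℝ → 𝔄)
    (hτ : ∀ t : ℝ, τ t =
      Ring.inverse (g t) * (∫ s in (0:ℝ)..t, g s * β s * Ring.inverse (g s)) * g t) :
    (∀ t : ℝ, HasDerivAt (fun u => g u * τ u * Ring.inverse (g u))
      (g t * β t * Ring.inverse (g t)) t) ∧
    (∀ t : ℝ, HasDerivAt τ (β t - (γ t * τ t - τ t * γ t)) t) :=
  stmt12_general γ β hβ g hgunit hgflow τ hτ
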